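/- arXiv:1804.07742 — 2 statements merged into one kernel-verified Lean document; each statement's English description precedes it below -/
import Mathlib

section
/- The mode is not identifiable with respect to the class of unimodal probability measures on ℝ admitting a smooth bounded density: there is no function V : ℝ × ℝ → ℝ such that for all such P, Γ_mode(P) = r ⟺ E_P[V(r,Y)] = 0. In fact this already fails on the three densities ψ_{0,1}, ψ_{4,1}, and (2/3)ψ_{0,1} + (1/3)ψ_{4,1}: if V were an identification function then E_{ψ_{0,1}}V(0,Y) = 0 and E_{p}V(0,Y) = 0 for the mixture p force E_{ψ_{4,1}}V(0,Y) = 0, contradicting mode(ψ_{4,1}) = 4 ≠ 0. -/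
open MeasureTheory

/-- `m` is the (unique) mode of the density `p`: a strict global maximizer. -/
def IsModeOf (m : ℝ) (p : ℝ → ℝ) : Prop := ∀ x, x ≠ m → p x < p m

/-- The class of unimodal probability densities on ℝ which are smooth and
bounded. -/
def SmoothUnimodalDensity (p : ℝ → ℝ) : Prop :=
  ContDiff ℝ (⊤ : ℕ∞) p ∧ (∃ B, ∀ x, p x ≤ B) ∧ (∀ x, 0 ≤ p x) ∧
    (∫ x, p x) = 1 ∧ ∃ m, IsModeOf m p

noncomputable def myF (x : ℝ) : ℝ := (x - 3/4) ^ 2 / (1 + x ^ 2) ^ 2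

lemma myF_nonneg (x : ℝ) : 0 ≤ myF x := by unfold myF; positivity

lemma myF_val : myF (-1/2) = 1 := by norm_num [myF]

lemma myF_lt (x : ℝ) (hx : x ≠ -1/2) : myF x < 1 := by
  have d1 : (0:ℝ) < (1 + x ^ 2) ^ 2 := by positivity
  have hq : (0:ℝ) < (x + 1/2) ^ 2 := by
    have : x + 1/2 ≠ 0 := fun h => hx (by linarith)
    positivity
  have h2 : (0:ℝ) < x ^ 2 - x + 7/4 := by nlinarith [sq_nonneg (2*x - 1)]
  have key : 1 - myF x
      = ((x ^ 2 - x + 7/4) * (x + 1/2) ^ 2) / (1 + x ^ 2) ^ 2 := by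
    unfold myF; field_simp; ring
  have : 0 < 1 - myF x := by
    rw [key]; exact div_pos (mul_pos h2 hq) d1
  linarith

lemma myF_le (x : ℝ) : myF x ≤ 1 := by
  rcases eq_or_ne x (-1/2) with rfl | h
  · rw [myF_val]
  · exact (myF_lt x h).le

lemma myF_contDiff : ContDiff ℝ (⊤ : ℕ∞) myF := by
  apply ContDiff.div
  · exact (contDiff_id.sub contDiff_const).pow 2
  · exact (contDiff_const.add (contDiff_id.pow 2)).pow 2
  · intro x; positivity

lemma myF_integrable : Integrable myF := by
  apply Integrable.mono (integrable_inv_one_add_sq.const_mul 2)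
    (myF_contDiff.continuous.aestronglyMeasurable)
  filter_upwards with x
  rw [Real.norm_eq_abs, Real.norm_eq_abs, abs_of_nonneg (myF_nonneg x),
    abs_of_nonneg (by positivity : (0:ℝ) ≤ 2 * (1 + x ^ 2)⁻¹)]
  rw [myF, div_le_iff₀ (by positivity)]
  have h : 2 * (1 + x ^ 2)⁻¹ * (1 + x ^ 2) ^ 2 = 2 * (1 + x ^ 2) := by
    field_simp
  rw [h]
  nlinarith [sq_nonneg (x + 3/4)]

lemma myF_integral_pos : 0 < ∫ x, myF x := by
  rw [integral_pos_iff_support_of_nonneg myF_nonneg myF_integrable]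
  have hopen : IsOpen (Function.support myF) :=
    myF_contDiff.continuous.isOpen_support
  have hne : (Function.support myF).Nonempty := by
    refine ⟨-1/2, ?_⟩
    simp only [Function.mem_support, myF_val]
    norm_num
  exact hopen.measure_pos volume hne

/-- the key inequality making `-1/2` the mode of the mixture. -/
lemma myF_key (x : ℝ) (hx : x ≠ -1/2) :
    2 * myF x + myF (x + 5/4) < 2 := by
  have d1 : (0:ℝ) < (1 + x ^ 2) ^ 2 := by positivity
  have d2 : (0:ℝ) < (1 + (x + 5/4) ^ 2) ^ 2 := by positivity
  have hq : (0:ℝ) < (x + 1/2) ^ 2 := by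
    have : x + 1/2 ≠ 0 := fun h => hx (by linarith)
    positivity
  have hB : (0:ℝ) <
      2 * (x ^ 2 - x + 7/4) * (1 + (x + 5/4) ^ 2) ^ 2 - (1 + x ^ 2) ^ 2 := by
    nlinarith [sq_nonneg (x + 3/2), sq_nonneg (x + 1), sq_nonneg (x ^ 2 + 2*x),
      sq_nonneg (x ^ 2 + 3*x + 1), sq_nonneg (x ^ 2 - 1), sq_nonneg x,
      sq_nonneg (x ^ 2 + x), sq_nonneg (x + 2)]
  have key : 2 - (2 * myF x + myF (x + 5/4))
      = ((x + 1/2) ^ 2 *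
          (2 * (x ^ 2 - x + 7/4) * (1 + (x + 5/4) ^ 2) ^ 2 - (1 + x ^ 2) ^ 2))
        / ((1 + x ^ 2) ^ 2 * (1 + (x + 5/4) ^ 2) ^ 2) := by
    unfold myF; field_simp; ring
  have : 0 < 2 - (2 * myF x + myF (x + 5/4)) := by
    rw [key]; exact div_pos (mul_pos hq hB) (mul_pos d1 d2)
  linarith

noncomputable def myPsi (x : ℝ) : ℝ := myF x / (∫ x, myF x)

lemma myPsi_nonneg (x : ℝ) : 0 ≤ myPsi x :=
  div_nonneg (myF_nonneg x) myF_integral_pos.le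

lemma myPsi_lt (x : ℝ) (hx : x ≠ -1/2) : myPsi x < myPsi (-1/2) := by
  unfold myPsi
  rw [myF_val]
  exact div_lt_div_of_pos_right (myF_lt x hx) myF_integral_pos

lemma myPsi_le (x : ℝ) : myPsi x ≤ myPsi (-1/2) := by
  rcases eq_or_ne x (-1/2) with rfl | h
  · exact le_rfl
  · exact (myPsi_lt x h).le

lemma myPsi_contDiff : ContDiff ℝ (⊤ : ℕ∞) myPsi := myF_contDiff.div_const _

lemma myPsi_integrable : Integrable myPsi := myF_integrable.div_const _

lemma myPsi_integral : (∫ x, myPsi x) = 1 := by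
  simp only [myPsi]
  rw [integral_div, div_self myF_integral_pos.ne']

lemma myPsi_smooth : SmoothUnimodalDensity myPsi :=
  ⟨myPsi_contDiff, ⟨myPsi (-1/2), myPsi_le⟩, myPsi_nonneg, myPsi_integral,
    -1/2, fun x hx => myPsi_lt x hx⟩

noncomputable def myPsi2 (x : ℝ) : ℝ := myPsi (x + 5/4)

lemma myPsi2_integral : (∫ x, myPsi2 x) = 1 := by
  show (∫ x, myPsi (x + 5/4)) = 1
  rw [integral_add_right_eq_self myPsi (5/4 : ℝ), myPsi_integral]

lemma myPsi2_smooth : SmoothUnimodalDensity myPsi2 := by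
  refine ⟨myPsi_contDiff.comp (contDiff_id.add contDiff_const),
    ⟨myPsi (-1/2), fun x => myPsi_le _⟩, fun x => myPsi_nonneg _,
    myPsi2_integral, -7/4, ?_⟩
  intro x hx
  have h4 : myPsi2 (-7/4) = myPsi (-1/2) := by
    show myPsi (-7/4 + 5/4) = myPsi (-1/2); norm_num
  rw [h4]
  exact myPsi_lt _ (fun h => hx (by linarith))

lemma myPsi2_integrable : Integrable myPsi2 := by
  have := myPsi_integrable.comp_add_right (5/4 : ℝ)
  exact this

noncomputable def myMix (x : ℝ) : ℝ := 2/3 * myPsi x + 1/3 * myPsi2 x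

lemma myMix_mode : IsModeOf (-1/2) myMix := by
  intro x hx
  have hc := myF_integral_pos
  have h0 : myPsi2 (-1/2) = 0 := by
    show myPsi (-1/2 + 5/4) = 0
    have : myF (-1/2 + 5/4) = 0 := by norm_num [myF]
    rw [myPsi, this, zero_div]
  have hM : myMix (-1/2) = 2/3 * myPsi (-1/2) := by rw [myMix, h0]; ring
  rw [hM]
  have key := myF_key x hx
  have hpsival : myPsi (-1/2) = 1 / (∫ x, myF x) := by rw [myPsi, myF_val]
  have e1 : myPsi x = myF x / (∫ x, myF x) := rfl
  have e2 : myPsi2 x = myF (x + 5/4) / (∫ x, myF x) := rfl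
  rw [myMix, e1, e2, hpsival]
  have eL : 2/3 * (myF x / (∫ x, myF x)) + 1/3 * (myF (x + 5/4) / (∫ x, myF x))
      = (2/3 * myF x + 1/3 * myF (x + 5/4)) / (∫ x, myF x) := by ring
  have eR : (2:ℝ)/3 * (1 / (∫ x, myF x)) = (2/3) / (∫ x, myF x) := by ring
  rw [eL, eR]
  exact div_lt_div_of_pos_right (by linarith) hc

lemma myMix_smooth : SmoothUnimodalDensity myMix := by
  refine ⟨?_, ⟨myPsi (-1/2), ?_⟩, ?_, ?_, -1/2, myMix_mode⟩
  · exact (myPsi_contDiff.const_smul (2/3 : ℝ)).add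
      ((myPsi_contDiff.comp (contDiff_id.add contDiff_const)).const_smul (1/3 : ℝ))
  · intro x
    have h1 := myPsi_le x
    have h2 := myPsi_le (x + 5/4)
    have h3 := myPsi_nonneg x
    have h4 := myPsi_nonneg (x + 5/4)
    show 2/3 * myPsi x + 1/3 * myPsi (x + 5/4) ≤ myPsi (-1/2)
    nlinarith
  · intro x
    have h3 := myPsi_nonneg x
    have h4 := myPsi_nonneg (x + 5/4)
    show 0 ≤ 2/3 * myPsi x + 1/3 * myPsi (x + 5/4)
    nlinarith
  · rw [show myMix = fun x => 2/3 * myPsi x + 1/3 * myPsi2 x from rfl]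
    rw [integral_add (myPsi_integrable.const_mul _) (myPsi2_integrable.const_mul _),
      integral_const_mul, integral_const_mul, myPsi_integral, myPsi2_integral]
    norm_num

/-- The mode is not identifiable with respect to the class of
unimodal probability measures on ℝ admitting a smooth bounded density: there
is no identification function `V : ℝ × ℝ → ℝ` such that for every density `p`
in the class, `Γ_mode(p) = r ⟺ E_p[V(r,Y)] = 0`. -/
theorem mode_not_identifiable :
    ¬ ∃ V : ℝ → ℝ → ℝ,
      (∀ p, SmoothUnimodalDensity p → ∀ r : ℝ,
        Integrable (fun y => V r y * p y)) ∧
      (∀ p, SmoothUnimodalDensity p → ∀ r : ℝ,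
        ((∫ y, V r y * p y) = 0 ↔ IsModeOf r p)) := by
  rintro ⟨V, hint, hiff⟩
  have I1 : Integrable (fun y => V (-1/2) y * myPsi y) := hint _ myPsi_smooth _
  have I2 : Integrable (fun y => V (-1/2) y * myPsi2 y) := hint _ myPsi2_smooth _
  have h1 : (∫ y, V (-1/2) y * myPsi y) = 0 :=
    (hiff _ myPsi_smooth (-1/2)).mpr (fun x hx => myPsi_lt x hx)
  have hp : (∫ y, V (-1/2) y * myMix y) = 0 :=
    (hiff _ myMix_smooth (-1/2)).mpr myMix_mode
  have hsplit : (∫ y, V (-1/2) y * myMix y)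
      = 2/3 * (∫ y, V (-1/2) y * myPsi y) + 1/3 * (∫ y, V (-1/2) y * myPsi2 y) := by
    rw [← integral_const_mul, ← integral_const_mul,
      ← integral_add (I1.const_mul _) (I2.const_mul _)]
    congr 1; ext y; rw [myMix]; ring
  have h2 : (∫ y, V (-1/2) y * myPsi2 y) = 0 := by
    rw [hp, h1] at hsplit; linarith
  have hmode : IsModeOf (-1/2) myPsi2 := (hiff _ myPsi2_smooth (-1/2)).mp h2
  have hlt := hmode (-7/4) (by norm_num)
  have hA : myPsi2 (-7/4) = myPsi (-1/2) := by
    show myPsi (-7/4 + 5/4) = myPsi (-1/2); norm_num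
  have hB : myPsi2 (-1/2) = 0 := by
    show myPsi (-1/2 + 5/4) = 0
    have : myF (-1/2 + 5/4) = 0 := by norm_num [myF]
    rw [myPsi, this, zero_div]
  rw [hA, hB] at hlt
  have hpos : 0 < myPsi (-1/2) := by
    rw [myPsi, myF_val]
    exact div_pos one_pos myF_integral_pos
  exact absurd hlt (not_lt.mpr hpos.le)
end

section
/- In the mixed-sign case of Theorem 3.3: suppose t > 5, γ·t < 1/4, Σₖhₖ = 1, h₀ − γ > h₁ > … > h_t > (3/4)h₀, and h' ∈ ℝ^t has maximal-magnitude entry h'_{i(max)} > 0 with some negative entry. Then (h₀ − h_{i(max)} + γ)/(h'_{i(max)} − γΣ_{k≠i(max)}h'_k) < min_{i: h'ᵢ<0} hᵢ/|h'ᵢ|, i.e., the interval of valid α is nonempty. The key chained inequalities are: h'_{i(max)} − γΣ_{k≠i(max)}h'_k > h'_{i(max)}(1 − γt) > (3/4)|h'ᵢ| for any i with h'ᵢ < 0, and h₀ − h_{i(max)} + γ < h₀/4 + γ < (3/4)h₀·(3/4). -/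
/-- Nonemptiness of the `α`-interval in the mixed-sign case of
Theorem 3.3. Under the stated conditions on `h` and `γ`, and for `h' ∈ ℝᵗ`
with positive maximal-magnitude entry `h'_{i(max)}` and some negative entry,
the denominator `h'_{i(max)} − γΣ_{k≠i(max)}h'_k` is positive and
`(h₀ − h_{i(max)} + γ)/(h'_{i(max)} − γΣ_{k≠i(max)}h'_k) < min_{i: h'ᵢ<0} hᵢ/|h'ᵢ|`. -/
theorem gaussian_mixed_sign_interval_nonempty
    (t : ℕ) (ht : 5 < t) (γ : ℝ) (hγ : 0 < γ)
    (hγt : γ * t < 1 / 4) (hγt' : γ < 1 / (4 * ((t : ℝ) + 1)))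
    (h : Fin (t + 1) → ℝ) (h' : Fin t → ℝ)
    (hpos : ∀ i, 0 < h i)
    (hsum : ∑ k, h k = 1)
    (hgap : h 1 < h 0 - γ)
    (hchain : ∀ i j : Fin (t + 1), 1 ≤ i → i < j → h j < h i)
    (hlast : 3 / 4 * h 0 < h (Fin.last t))
    (imax : Fin t) (himax : ∀ i, |h' i| ≤ h' imax) (himaxpos : 0 < h' imax)
    (hneg : ∃ i, h' i < 0) :
    0 < h' imax - γ * (∑ k ∈ Finset.univ.erase imax, h' k) ∧
    ∀ i : Fin t, h' i < 0 →
      (h 0 - h imax.succ + γ)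
          / (h' imax - γ * (∑ k ∈ Finset.univ.erase imax, h' k))
        < h i.succ / |h' i| := by
  have h0pos : 0 < h 0 := hpos 0
  -- every entry below h 0
  have hle : ∀ k : Fin (t + 1), h k ≤ h 0 := by
    intro k
    rcases eq_or_ne k 0 with rfl | hk
    · exact le_rfl
    · have h1 : (1 : Fin (t + 1)) ≤ k := by
        have hv1 : ((1 : Fin (t + 1)) : ℕ) = 1 := by
          exact (Fin.val_one' (t + 1)).trans (Nat.mod_eq_of_lt (by omega))
        rw [Fin.le_def, hv1]
        have : k.val ≠ 0 := fun hh => hk (Fin.ext hh)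
        omega
      rcases eq_or_lt_of_le h1 with h1' | h1'
      · rw [← h1']; linarith
      · have := hchain 1 k le_rfl h1'
        linarith
  have htpos : (0 : ℝ) < (t : ℝ) + 1 := by positivity
  -- h 0 ≥ 1/(t+1)
  have hsumle : (1 : ℝ) ≤ (t + 1 : ℝ) * h 0 := by
    have hb : ∑ k, h k ≤ ∑ _k : Fin (t+1), h 0 :=
      Finset.sum_le_sum fun k _ => hle k
    rw [hsum, Finset.sum_const, Finset.card_univ, Fintype.card_fin,
      nsmul_eq_mul] at hb
    push_cast at hb
    linarith
  have hγh0 : γ < h 0 / 4 := by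
    have : 1 / (4 * ((t : ℝ) + 1)) ≤ h 0 / 4 := by
      rw [div_le_div_iff₀ (by positivity) (by norm_num)]
      nlinarith
    linarith
  -- every h at positive index exceeds (3/4) h 0
  have hmin : ∀ i : Fin t, 3 / 4 * h 0 < h i.succ := by
    intro i
    rcases eq_or_lt_of_le (Fin.le_last i.succ) with hl | hl
    · rw [hl]; exact hlast
    · have h1 : (1 : Fin (t+1)) ≤ i.succ := by
        have hv1 : ((1 : Fin (t + 1)) : ℕ) = 1 := by
          exact (Fin.val_one' (t + 1)).trans (Nat.mod_eq_of_lt (by omega))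
        rw [Fin.le_def, hv1]
        have : 1 ≤ (i.succ : ℕ) := i.succ_pos
        omega
      have := hchain i.succ (Fin.last t) h1 hl
      linarith
  -- denominator bound
  set S := ∑ k ∈ Finset.univ.erase imax, h' k with hS
  have hSabs : |S| ≤ (t : ℝ) * h' imax := by
    calc |S| ≤ ∑ k ∈ Finset.univ.erase imax, |h' k| := Finset.abs_sum_le_sum_abs _ _
      _ ≤ ∑ _k ∈ Finset.univ.erase imax, h' imax :=
          Finset.sum_le_sum fun k _ => himax k
      _ = ((Finset.univ.erase imax).card : ℝ) * h' imax := by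
          rw [Finset.sum_const]; simp [nsmul_eq_mul]
      _ ≤ (t : ℝ) * h' imax := by
          apply mul_le_mul_of_nonneg_right _ himaxpos.le
          have : (Finset.univ.erase imax).card ≤ t := by
            calc (Finset.univ.erase imax).card ≤ Finset.univ.card :=
              Finset.card_le_card (Finset.erase_subset _ _)
              _ = t := by simp
          exact_mod_cast this
  have hγS : γ * S < h' imax / 4 := by
    have h1 : γ * S ≤ γ * |S| := by
      have := le_abs_self S
      nlinarith
    have h2 : γ * |S| ≤ γ * ((t : ℝ) * h' imax) := by nlinarith
    nlinarith
  have hD : 3 / 4 * h' imax < h' imax - γ * S := by linarith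
  have hDpos : 0 < h' imax - γ * S := by linarith
  refine ⟨hDpos, fun i hi => ?_⟩
  have habs : 0 < |h' i| := abs_pos.2 (ne_of_lt hi)
  rw [div_lt_div_iff₀ hDpos habs]
  have hnum : h 0 - h imax.succ + γ < 9 / 16 * h 0 := by
    have := hmin imax
    linarith
  have hnumpos : 0 < h 0 - h imax.succ + γ := by
    have : h imax.succ ≤ h 0 := hle _
    linarith
  have h1 : (h 0 - h imax.succ + γ) * |h' i| < 9 / 16 * h 0 * h' imax := by
    have := himax i
    nlinarith
  have h2 : 9 / 16 * h 0 * h' imax < h i.succ * (h' imax - γ * S) := by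
    have := hmin i
    nlinarith
  linarith
end
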